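/- arXiv:2402.14732 — 9 statements merged into one kernel-verified Lean document; each statement's English description precedes it below -/
import Mathlib

section
/- Let F be a finite set of sequences in ℤ (functions ℕ → ℤ) and let d ∈ ℕ with d ≥ 1. Then there exists a sequence (Kₙ) of nonempty finite subsets of ℕ such that for each n, max Kₙ < min Kₙ₊₁, and for every f ∈ F and every n, d divides ∑_{t ∈ Kₙ} f(t). Moreover, one can choose Kₙ ⊆ {(n-1)k+1, ..., nk} where k = d^{|F|}(d-1)+1. -/
lemma key_block (F : Finset (ℕ → ℤ)) (d : ℕ) (hd : 1 ≤ d) (m : ℕ) :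
    ∃ K : Finset ℕ, K.Nonempty ∧
      K ⊆ Finset.Ioc m (m + (d ^ F.card * (d - 1) + 1)) ∧
      ∀ f ∈ F, (d : ℤ) ∣ ∑ t ∈ K, f t := by
  classical
  haveI : NeZero d := ⟨by omega⟩
  set k := d ^ F.card * (d - 1) + 1 with hk
  have hcard : Fintype.card (↥F → ZMod d) < (Finset.range (k + 1)).card := by
    rw [Finset.card_range, Fintype.card_fun, ZMod.card, Fintype.card_coe]
    have h1 : 1 ≤ d ^ F.card := Nat.one_le_pow _ _ (by omega)
    by_cases h2 : 2 ≤ d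
    · have : d ^ F.card ≤ d ^ F.card * (d - 1) :=
        Nat.le_mul_of_pos_right _ (by omega)
      omega
    · have hd1 : d = 1 := by omega
      subst hd1
      simp [hk]
  have hmaps : ∀ j ∈ Finset.range (k + 1),
      (fun f : ↥F => ((∑ t ∈ Finset.Ioc m (m + j), (f : ℕ → ℤ) t : ℤ) : ZMod d))
        ∈ (Finset.univ : Finset (↥F → ZMod d)) := fun _ _ => Finset.mem_univ _
  obtain ⟨i, hi, j, hj, hne, heq⟩ :=
    Finset.exists_ne_map_eq_of_card_lt_of_maps_to hcard hmaps
  simp only [Finset.mem_range] at hi hj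
  -- wlog i < j
  rcases Nat.lt_or_ge i j with hij | hij
  · refine ⟨Finset.Ioc (m + i) (m + j), Finset.nonempty_Ioc.2 (by omega), ?_, ?_⟩
    · exact Finset.Ioc_subset_Ioc (by omega) (by omega)
    · intro f hf
      have hsplit : (∑ t ∈ Finset.Ioc m (m + i), f t)
          + ∑ t ∈ Finset.Ioc (m + i) (m + j), f t
          = ∑ t ∈ Finset.Ioc m (m + j), f t :=
        Finset.sum_Ioc_consecutive _ (by omega) (by omega)
      have := congrFun heq ⟨f, hf⟩
      simp only at this
      rw [← ZMod.intCast_zmod_eq_zero_iff_dvd]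
      have : ((∑ t ∈ Finset.Ioc (m + i) (m + j), f t : ℤ) : ZMod d)
          = ((∑ t ∈ Finset.Ioc m (m + j), f t : ℤ) : ZMod d)
            - ((∑ t ∈ Finset.Ioc m (m + i), f t : ℤ) : ZMod d) := by
        rw [← hsplit]; push_cast; ring
      rw [this, congrFun heq ⟨f, hf⟩, sub_self]
  · have hij' : j < i := by omega
    refine ⟨Finset.Ioc (m + j) (m + i), Finset.nonempty_Ioc.2 (by omega), ?_, ?_⟩
    · exact Finset.Ioc_subset_Ioc (by omega) (by omega)
    · intro f hf
      have hsplit : (∑ t ∈ Finset.Ioc m (m + j), f t)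
          + ∑ t ∈ Finset.Ioc (m + j) (m + i), f t
          = ∑ t ∈ Finset.Ioc m (m + i), f t :=
        Finset.sum_Ioc_consecutive _ (by omega) (by omega)
      rw [← ZMod.intCast_zmod_eq_zero_iff_dvd]
      have : ((∑ t ∈ Finset.Ioc (m + j) (m + i), f t : ℤ) : ZMod d)
          = ((∑ t ∈ Finset.Ioc m (m + i), f t : ℤ) : ZMod d)
            - ((∑ t ∈ Finset.Ioc m (m + j), f t : ℤ) : ZMod d) := by
        rw [← hsplit]; push_cast; ring
      rw [this, congrFun heq ⟨f, hf⟩, sub_self]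

/-- For a finite set `F` of integer sequences and `d ≥ 1`, there is a
sequence `K` of nonempty finite blocks, with `max Kₙ < min Kₙ₊₁`, each contained in the
`n`-th block of length `k = d^|F| * (d-1) + 1`, on which all sums `∑_{t∈Kₙ} f t` are
divisible by `d`.  (Blocks indexed from `0`: `Kₙ ⊆ {n*k+1, …, (n+1)*k}`.) -/
theorem stmt0 (F : Finset (ℕ → ℤ)) (d : ℕ) (hd : 1 ≤ d) :
    ∃ K : ℕ → Finset ℕ,
      (∀ n, (K n).Nonempty) ∧
      (∀ n, ∀ a ∈ K n, ∀ b ∈ K (n + 1), a < b) ∧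
      (∀ f ∈ F, ∀ n, (d : ℤ) ∣ ∑ t ∈ K n, f t) ∧
      (∀ n, K n ⊆ Finset.Icc (n * (d ^ F.card * (d - 1) + 1) + 1)
        ((n + 1) * (d ^ F.card * (d - 1) + 1))) := by
  set k := d ^ F.card * (d - 1) + 1 with hk
  choose K hne hsub hdvd using fun n => key_block F d hd (n * k)
  have hsub' : ∀ n, K n ⊆ Finset.Icc (n * k + 1) ((n + 1) * k) := by
    intro n
    have : n * k + k = (n + 1) * k := by ring
    intro x hx
    have := hsub n hx
    rw [Finset.mem_Ioc] at this
    rw [Finset.mem_Icc]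
    constructor <;> [omega; nlinarith]
  refine ⟨K, hne, ?_, fun f hf n => hdvd n f hf, hsub'⟩
  intro n a ha b hb
  have h1 := (Finset.mem_Icc.1 (hsub' n ha)).2
  have h2 := (Finset.mem_Icc.1 (hsub' (n + 1) hb)).1
  nlinarith
end

section
/- For any finite set L of functions from ℕ to ℤ with |L| = m, and any d ≥ 1, there exists a finite nonempty set K ⊆ {1, 2, ..., d^m(d-1)+1} such that d divides ∑_{t ∈ K} f(t) for every f ∈ L. -/
/-- For a finite set `L` of integer sequences with `|L| = m` and `d ≥ 1`,
there is a nonempty `K ⊆ {1, …, d^m (d-1) + 1}` with `d ∣ ∑_{t∈K} f t` for all `f ∈ L`. -/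
theorem stmt2 (L : Finset (ℕ → ℤ)) (m d : ℕ) (hm : L.card = m) (hd : 1 ≤ d) :
    ∃ K : Finset ℕ, K.Nonempty ∧ K ⊆ Finset.Icc 1 (d ^ m * (d - 1) + 1) ∧
      ∀ f ∈ L, (d : ℤ) ∣ ∑ t ∈ K, f t := by
  rcases eq_or_lt_of_le hd with h1 | h2
  · refine ⟨{1}, Finset.singleton_nonempty 1, ?_, ?_⟩
    · intro x hx
      simp at hx
      simp [hx]
    · intro f hf
      rw [← h1]
      exact one_dvd _
  · -- d ≥ 2
    haveI : NeZero d := ⟨by omega⟩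
    classical
    set F : ℕ → ({x // x ∈ L} → ZMod d) := fun n f => ∑ t ∈ Finset.Icc 1 n, ((f.1 t : ZMod d))
    have hcard : Fintype.card ({x // x ∈ L} → ZMod d) = d ^ m := by
      simp [Fintype.card_fun, ZMod.card, hm]
    obtain ⟨a, ha, b, hb, hab, hFab⟩ :
        ∃ a ∈ Finset.range (d ^ m + 1), ∃ b ∈ Finset.range (d ^ m + 1), a ≠ b ∧ F a = F b := by
      have := Finset.exists_ne_map_eq_of_card_lt_of_maps_to
        (s := Finset.range (d ^ m + 1)) (t := (Finset.univ : Finset ({x // x ∈ L} → ZMod d)))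
        (by simp [hcard]) (fun x _ => Finset.mem_univ (F x))
      obtain ⟨a, ha, b, hb, hne, heq⟩ := this
      exact ⟨a, ha, b, hb, hne, heq⟩
    wlog hlt : a < b generalizing a b
    · exact this b hb a ha hab.symm hFab.symm (by omega)
    simp only [Finset.mem_range] at ha hb
    refine ⟨Finset.Icc (a + 1) b, ?_, ?_, ?_⟩
    · exact Finset.nonempty_Icc.2 (by omega)
    · intro x hx
      simp only [Finset.mem_Icc] at hx ⊢
      constructor
      · omega
      · have hbd : b ≤ d ^ m := by omega
        have : d ^ m ≤ d ^ m * (d - 1) := Nat.le_mul_of_pos_right _ (by omega)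
        omega
    · intro f hf
      have hsum : ∑ t ∈ Finset.Icc 1 a, f t + ∑ t ∈ Finset.Icc (a + 1) b, f t
          = ∑ t ∈ Finset.Icc 1 b, f t := by
        rw [← Finset.sum_union (by
          rw [Finset.disjoint_left]
          intro x hx hx'
          simp only [Finset.mem_Icc] at hx hx'
          omega)]
        congr 1
        ext x
        simp only [Finset.mem_union, Finset.mem_Icc]
        omega
      have hz : ((∑ t ∈ Finset.Icc (a + 1) b, f t : ℤ) : ZMod d) = 0 := by
        have := congrFun hFab ⟨f, hf⟩
        simp only [F] at this
        have h1 : ((∑ t ∈ Finset.Icc 1 a, f t : ℤ) : ZMod d)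
            = ∑ t ∈ Finset.Icc 1 a, ((f t : ZMod d)) := by push_cast; ring
        have h2 : ((∑ t ∈ Finset.Icc 1 b, f t : ℤ) : ZMod d)
            = ∑ t ∈ Finset.Icc 1 b, ((f t : ZMod d)) := by push_cast; ring
        have := hsum
        have hcast : ((∑ t ∈ Finset.Icc 1 a, f t : ℤ) : ZMod d)
            + ((∑ t ∈ Finset.Icc (a+1) b, f t : ℤ) : ZMod d)
            = ((∑ t ∈ Finset.Icc 1 b, f t : ℤ) : ZMod d) := by
          rw [← Int.cast_add, hsum]
        rw [h1, h2] at hcast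
        have hFeq : (∑ t ∈ Finset.Icc 1 a, ((f t : ZMod d)))
            = ∑ t ∈ Finset.Icc 1 b, ((f t : ZMod d)) := congrFun hFab ⟨f, hf⟩
        rw [hFeq] at hcast
        linear_combination hcast
      exact (ZMod.intCast_zmod_eq_zero_iff_dvd _ d).1 hz
end

section
/- Every piecewise syndetic subset of a commutative semigroup (S,+) is a combinatorially rich set (CR-set). -/
/-- `A` is piecewise syndetic: some finite `G ⊆ S` such that every finite `F ⊆ S`
admits `x` with `F + x ⊆ ⋃_{t∈G} (-t + A)`. -/
def PiecewiseSyndetic {S : Type*} [AddCommMonoid S] (A : Set S) : Prop :=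
  ∃ G : Finset S, G.Nonempty ∧
    ∀ F : Finset S, ∃ x : S, ∀ y ∈ F, ∃ t ∈ G, t + (y + x) ∈ A

/-- `A` is combinatorially rich: for each `k` there is `r` such that for every `r × k`
matrix `M` over `S` there are `a ∈ S` and nonempty `H ⊆ {1,…,r}` with
`a + ∑_{t∈H} M t j ∈ A` for all columns `j`. -/
def CRSet {S : Type*} [AddCommMonoid S] (A : Set S) : Prop :=
  ∀ k : ℕ, ∃ r : ℕ, ∀ M : Fin r → Fin k → S,
    ∃ (a : S) (H : Finset (Fin r)), H.Nonempty ∧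
      ∀ j : Fin k, a + ∑ t ∈ H, M t j ∈ A

/-- every piecewise syndetic set in a commutative semigroup is a CR-set. -/
theorem stmt3 {S : Type*} [AddCommMonoid S] (A : Set S)
    (hA : PiecewiseSyndetic A) : CRSet A := by
  classical
  intro k
  rcases Nat.eq_zero_or_pos k with hk | hk
  · -- trivial case k = 0
    subst hk
    refine ⟨1, fun M => ⟨0, {0}, ⟨0, Finset.mem_singleton_self 0⟩, fun j => j.elim0⟩⟩
  obtain ⟨G, hGne, hG⟩ := hA
  obtain ⟨ι, hι, hHJ⟩ :=
    Combinatorics.Line.exists_mono_in_high_dimension (Fin k) {t // t ∈ G}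
  refine ⟨Fintype.card ι, fun M => ?_⟩
  set e : ι ≃ Fin (Fintype.card ι) := Fintype.equivFin ι with he
  set s : (ι → Fin k) → S := fun w => ∑ i : ι, M (e i) (w i) with hs
  obtain ⟨x0, hx0⟩ := hG (Finset.image s Finset.univ)
  have hw : ∀ w : ι → Fin k, ∃ t ∈ G, t + (s w + x0) ∈ A := fun w =>
    hx0 (s w) (Finset.mem_image_of_mem s (Finset.mem_univ w))
  choose t ht hmem using hw
  set C : (ι → Fin k) → {t // t ∈ G} := fun w => ⟨t w, ht w⟩ with hC
  obtain ⟨l, c, hc⟩ := hHJ C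
  -- the variable positions
  set V : Finset ι := Finset.univ.filter (fun i => l.idxFun i = none) with hV
  obtain ⟨i0, hi0⟩ := l.proper
  have hi0V : i0 ∈ V := by simp [hV, hi0]
  set j0 : Fin k := ⟨0, hk⟩ with hj0
  refine ⟨(c : S) + (∑ i ∈ Vᶜ, M (e i) ((l.idxFun i).getD j0)) + x0,
    V.map e.toEmbedding, ⟨e i0, Finset.mem_map_of_mem _ hi0V⟩, fun j => ?_⟩
  have hcj := hc j
  have hA' : t (l j) + (s (l j) + x0) ∈ A := hmem (l j)
  have hct : (c : S) = t (l j) := by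
    rw [← hcj]
  -- rewrite the goal as that element
  have hsum : (c : S) + (∑ i ∈ Vᶜ, M (e i) ((l.idxFun i).getD j0)) + x0
      + ∑ u ∈ V.map e.toEmbedding, M u j = t (l j) + (s (l j) + x0) := by
    rw [hct]
    have h1 : ∑ u ∈ V.map e.toEmbedding, M u j = ∑ i ∈ V, M (e i) j :=
      Finset.sum_map V e.toEmbedding (fun u => M u j)
    have h2 : s (l j) = (∑ i ∈ Vᶜ, M (e i) ((l.idxFun i).getD j0)) + ∑ i ∈ V, M (e i) j := by
      show (∑ i : ι, M (e i) ((l.idxFun i).getD j)) = _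
      rw [← Finset.sum_add_sum_compl V (fun i => M (e i) ((l.idxFun i).getD j)), add_comm]
      congr 1
      · refine Finset.sum_congr rfl fun i hic => ?_
        have : l.idxFun i ≠ none := by
          simp only [hV, Finset.mem_compl, Finset.mem_filter, Finset.mem_univ, true_and] at hic
          exact hic
        obtain ⟨b, hb⟩ := Option.ne_none_iff_exists'.mp this
        simp [Combinatorics.Line.coe_apply, hb]
      · refine Finset.sum_congr rfl fun i hiv => ?_
        have : l.idxFun i = none := by
          simp only [hV, Finset.mem_filter, Finset.mem_univ, true_and] at hiv
          exact hiv
        simp [Combinatorics.Line.coe_apply, this]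
    rw [h1, h2]
    abel
  rw [hsum]
  exact hA'
end

section
/- Every combinatorially rich subset of a commutative semigroup (S,+) is a J-set. -/
/-- `A` is a J-set: for every finite set `F` of sequences in `S` there are `a` and a
finite nonempty `H ⊆ ℕ` with `a + ∑_{n∈H} f n ∈ A` for each `f ∈ F`. -/
def JSet {S : Type*} [AddCommMonoid S] (A : Set S) : Prop :=
  ∀ F : Finset (ℕ → S), ∃ (a : S) (H : Finset ℕ), H.Nonempty ∧
    ∀ f ∈ F, a + ∑ n ∈ H, f n ∈ A

/-- every CR-set in a commutative semigroup is a J-set. -/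
theorem stmt4 {S : Type*} [AddCommMonoid S] (A : Set S) (hA : CRSet A) : JSet A := by
  intro F
  obtain ⟨r, hr⟩ := hA F.card
  classical
  let e := F.equivFin
  obtain ⟨a, H, hHne, hH⟩ := hr (fun t j => (e.symm j : ℕ → S) t)
  refine ⟨a, H.image Fin.val, hHne.image _, ?_⟩
  intro f hf
  have := hH (e ⟨f, hf⟩)
  simp only [Equiv.symm_apply_apply] at this
  rwa [Finset.sum_image (fun x _ y _ h => Fin.val_injective h)]
end

section
/- The family of CR-sets in a commutative semigroup (S,+) is translation invariant: if A ⊆ S is a CR-set and s ∈ S, then −s + A = {x ∈ S : s + x ∈ A} is a CR-set. -/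
/-- CR-sets are translation invariant: if `A` is a CR-set and `s ∈ S`,
then `-s + A = {x : s + x ∈ A}` is a CR-set. -/
theorem stmt6 {S : Type*} [AddCommMonoid S] (A : Set S) (s : S) (hA : CRSet A) :
    CRSet {x : S | s + x ∈ A} := by
  intro k
  obtain ⟨r, hr⟩ := hA k
  refine ⟨r, fun M => ?_⟩
  obtain ⟨a, H, hH, hmem⟩ := hr (fun t j => s + M t j)
  refine ⟨a + (H.card - 1) • s, H, hH, fun j => ?_⟩
  have h := hmem j
  have hsum : ∑ t ∈ H, (s + M t j) = H.card • s + ∑ t ∈ H, M t j := by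
    rw [Finset.sum_add_distrib, Finset.sum_const]
  rw [hsum] at h
  have hcard : H.card = 1 + (H.card - 1) :=
    (Nat.add_sub_cancel' (Finset.card_pos.mpr hH)).symm
  simp only [Set.mem_setOf_eq]
  have heq : s + (a + (H.card - 1) • s + ∑ t ∈ H, M t j)
      = a + ((1 + (H.card - 1)) • s + ∑ t ∈ H, M t j) := by
    rw [add_smul, one_smul]; abel
  rw [heq, ← hcard]; exact h
end

section
/- Let m, u, v ∈ ℕ and let A be a u × v matrix with rational entries such that for each a ∈ ℤ there exists x⃗ ∈ ℤ^v with A x⃗ = (a, a, ..., a) ∈ ℤ^u. If B ⊆ ℤ is an mu-CR-set, then C = {y⃗ ∈ ℤ^v : A y⃗ ∈ B^u} is an m-CR-set in (ℤ^v, +). -/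
/-- `A` is a `k`-CR-set in the commutative semigroup `S`. -/
def kCRSet {S : Type*} [AddCommMonoid S] (k : ℕ) (A : Set S) : Prop :=
  ∃ r : ℕ, ∀ F : Finset (ℕ → S), F.card ≤ k →
    ∃ (a : S) (H : Finset ℕ), H.Nonempty ∧ H ⊆ Finset.Icc 1 r ∧
      ∀ f ∈ F, a + ∑ t ∈ H, f t ∈ A

/-!
Clearing denominators, the `y ∈ ℤ^v` with `A y ∈ ℤ^u` form a finite-index subgroup `L`. Given at
most `m` sequences `f`, pigeonhole on the cosets of their partial sums yields
`e 0 < ⋯ < e r ≤ [ℤ^v : L]^m r` such that every block sum `∑_{e (t-1) < s ≤ e t} f s` lies in `L`.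
The `mu`-CR property of `B`, applied to the integer sequences `t ↦ (A (block_t f))_i`, gives `a` and
`H`; then `x` with `A x = (a, …, a)` and the union of the blocks indexed by `H` witness that the
preimage is an `m`-CR-set.
-/

open Finset

theorem exists_monotone_monochromatic_of_finite {κ : Type*} [Finite κ] (c : ℕ → κ) (r : ℕ) :
    ∃ e : ℕ → ℕ, Monotone e ∧ StrictMonoOn e (Set.Iic r) ∧ e r ≤ Nat.card κ * r ∧
      ∀ s t, c (e s) = c (e t) := by
  classical
  have := Fintype.ofFinite κ
  have hcard : #(univ : Finset κ) * r < #(range (Nat.card κ * r + 1)) := by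
    simp [Nat.card_eq_fintype_card]
  obtain ⟨y, -, hy⟩ := exists_lt_card_fiber_of_mul_lt_card_of_maps_to
    (fun n _ => mem_univ (c n)) hcard
  set T := {n ∈ range (Nat.card κ * r + 1) | c n = y}
  set emb := T.orderEmbOfCardLe hy
  have hmem (t : ℕ) : emb ⟨min t r, by omega⟩ ∈ T := T.orderEmbOfCardLe_mem hy _
  refine ⟨fun t => emb ⟨min t r, by omega⟩, fun a b hab => emb.monotone ?_,
    fun a ha b hb hab => emb.strictMono ?_, ?_, fun s t => ?_⟩
  · simp only [Fin.mk_le_mk]; omega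
  · simp only [Set.mem_Iic] at ha hb
    simp only [Fin.mk_lt_mk]; omega
  · have := mem_range.1 (mem_filter.1 (hmem r)).1
    simp only [min_self] at this ⊢
    omega
  · rw [(mem_filter.1 (hmem s)).2, (mem_filter.1 (hmem t)).2]

theorem exists_sum_eq_sum_blocks {M : Type*} [AddCommMonoid M] {e : ℕ → ℕ} {r : ℕ}
    (he : Monotone e) (he' : StrictMonoOn e (Set.Iic r)) {H : Finset ℕ} (hH : H.Nonempty)
    (hHr : H ⊆ Icc 1 r) :
    ∃ H' : Finset ℕ, H'.Nonempty ∧ H' ⊆ Icc 1 (e r) ∧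
      ∀ f : ℕ → M, ∑ s ∈ H', f s = ∑ t ∈ H, ∑ s ∈ Ioc (e (t - 1)) (e t), f s := by
  have hH1 : ∀ t ∈ H, 1 ≤ t ∧ t ≤ r := fun t ht => mem_Icc.1 (hHr ht)
  refine ⟨H.biUnion fun t => Ioc (e (t - 1)) (e t), ?_, ?_, fun f => sum_biUnion ?_⟩
  · obtain ⟨t, ht⟩ := hH
    obtain ⟨ht1, htr⟩ := hH1 t ht
    have hlt : e (t - 1) < e t :=
      he' (Set.mem_Iic.2 (by omega)) (Set.mem_Iic.2 htr) (by omega)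
    exact ⟨e t, mem_biUnion.2 ⟨t, ht, mem_Ioc.2 ⟨hlt, le_rfl⟩⟩⟩
  · intro s hs
    obtain ⟨t, ht, hs⟩ := mem_biUnion.1 hs
    rw [mem_Ioc] at hs
    exact mem_Icc.2 ⟨by omega, hs.2.trans (he (hH1 t ht).2)⟩
  · have hdisj {a b : ℕ} (hab : a < b) :
        Disjoint (Ioc (e (a - 1)) (e a)) (Ioc (e (b - 1)) (e b)) := by
      refine disjoint_left.2 fun s hsa hsb => ?_
      rw [mem_Ioc] at hsa hsb
      have : e a ≤ e (b - 1) := he (by omega)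
      omega
    intro a _ b _ hab
    rcases hab.lt_or_gt with h | h
    exacts [hdisj h, (hdisj h).symm]

theorem AddSubgroup.exists_blocks_sum_mem {G : Type*} [AddCommGroup G] (L : AddSubgroup G)
    [L.FiniteIndex] {k : ℕ} (F : Finset (ℕ → G)) (hF : #F ≤ k) (r : ℕ) :
    ∃ e : ℕ → ℕ, Monotone e ∧ StrictMonoOn e (Set.Iic r) ∧ e r ≤ L.index ^ k * r ∧
      ∀ f ∈ F, ∀ t, ∑ s ∈ Ioc (e (t - 1)) (e t), f s ∈ L := by
  -- equal colours at `e (t - 1)` and `e t` put the block sum between them in `L`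
  let c : ℕ → F → G ⧸ L := fun n f => ↑(∑ s ∈ Ioc 0 n, (f : ℕ → G) s)
  obtain ⟨e, he, he', her, hc⟩ := exists_monotone_monochromatic_of_finite c r
  refine ⟨e, he, he', her.trans (Nat.mul_le_mul_right r ?_), fun f hf t => ?_⟩
  · rw [Nat.card_fun, Nat.card_eq_finsetCard, ← AddSubgroup.index]
    exact Nat.pow_le_pow_right (Nat.pos_of_ne_zero AddSubgroup.FiniteIndex.index_ne_zero) hF
  · have hsum := sum_Ioc_consecutive f (Nat.zero_le (e (t - 1))) (he (Nat.sub_le t 1))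
    have hmem := QuotientAddGroup.eq.1 (congrFun (hc (t - 1) t) ⟨f, hf⟩)
    rwa [← hsum, neg_add_cancel_left] at hmem

namespace Matrix

variable {m n : Type*} [Fintype n]

def intMulVec (A : Matrix m n ℚ) : (n → ℤ) →+ (m → ℚ) :=
  A.mulVecLin.toAddMonoidHom.comp ((Int.castAddHom ℚ).compLeft n)

theorem intMulVec_apply (A : Matrix m n ℚ) (y : n → ℤ) :
    A.intMulVec y = A.mulVec (fun j => (y j : ℚ)) := rfl

def integralPreimage (A : Matrix m n ℚ) : AddSubgroup (n → ℤ) :=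
  (AddSubgroup.pi Set.univ fun _ => (Int.castAddHom ℚ).range).comap A.intMulVec

theorem mem_integralPreimage {A : Matrix m n ℚ} {y : n → ℤ} :
    y ∈ A.integralPreimage ↔ ∀ i, ∃ z : ℤ, A.mulVec (fun j => (y j : ℚ)) i = z := by
  simp only [integralPreimage, AddSubgroup.mem_comap, AddSubgroup.mem_pi, Set.mem_univ,
    true_imp_iff, AddMonoidHom.mem_range, Int.coe_castAddHom, intMulVec_apply, eq_comm]

instance finiteIndex_integralPreimage [Finite m] (A : Matrix m n ℚ) :
    A.integralPreimage.FiniteIndex := by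
  obtain ⟨⟨b, hb0⟩, hb⟩ := IsLocalization.exist_integer_multiples_of_finite
    (nonZeroDivisors ℤ) fun p : m × n => A p.1 p.2
  have : NeZero b.natAbs := ⟨Int.natAbs_ne_zero.2 (nonZeroDivisors.ne_zero hb0)⟩
  -- the preimage contains every vector divisible by the common denominator `b`
  let reduce : (n → ℤ) →+ (n → ZMod b.natAbs) := (Int.castAddHom _).compLeft n
  refine AddSubgroup.finiteIndex_of_le (H := reduce.ker) fun y hy => mem_integralPreimage.2 ?_
  choose N hN using fun i j => hb (i, j)
  choose w hw using fun j =>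
    Int.natAbs_dvd.1 ((ZMod.intCast_zmod_eq_zero_iff_dvd _ _).1 (congrFun hy j))
  refine fun i => ⟨∑ j, N i j * w j, ?_⟩
  simp only [mulVec, dotProduct, hw, Int.cast_sum, Int.cast_mul]
  refine sum_congr rfl fun j _ => ?_
  have hNij : (N i j : ℚ) = b * A i j := by simpa using hN i j
  rw [hNij]
  ring

end Matrix

/-- if `A` is a `u × v` rational matrix whose image contains every
constant integer vector, and `B ⊆ ℤ` is an `m*u`-CR-set, then
`{y ∈ ℤ^v : A y ∈ B^u}` is an `m`-CR-set in `ℤ^v`. -/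
theorem stmt8 (m u v : ℕ) (A : Matrix (Fin u) (Fin v) ℚ)
    (hA : ∀ a : ℤ, ∃ x : Fin v → ℤ,
      ∀ i : Fin u, A.mulVec (fun j => (x j : ℚ)) i = (a : ℚ))
    (B : Set ℤ) (hB : kCRSet (m * u) B) :
    kCRSet m {y : Fin v → ℤ |
      ∀ i : Fin u, ∃ b ∈ B, A.mulVec (fun j => (y j : ℚ)) i = (b : ℚ)} := by
  classical
  obtain ⟨r, hr⟩ := hB
  refine ⟨A.integralPreimage.index ^ m * r, fun F hF => ?_⟩
  obtain ⟨e, he, he', her, hblock⟩ := A.integralPreimage.exists_blocks_sum_mem F hF r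
  choose g hg using fun (f : F) t => Matrix.mem_integralPreimage.1 (hblock f f.2 t)
  have hG : #(univ.image fun p : F × Fin u => fun t => g p.1 t p.2) ≤ m * u :=
    card_image_le.trans (by simpa using Nat.mul_le_mul_right u hF)
  obtain ⟨b, H, hH, hHr, hbH⟩ := hr _ hG
  obtain ⟨x, hx⟩ := hA b
  obtain ⟨H', hH', hH'e, hsum⟩ := exists_sum_eq_sum_blocks (M := Fin v → ℤ) he he' hH hHr
  refine ⟨x, H', hH', hH'e.trans (Icc_subset_Icc_right her), fun f hf i => ?_⟩
  refine ⟨b + ∑ t ∈ H, g ⟨f, hf⟩ t i,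
    hbH _ (mem_image_of_mem _ (mem_univ ((⟨f, hf⟩ : F), i))), ?_⟩
  change A.intMulVec (x + ∑ s ∈ H', f s) i = _
  rw [map_add, hsum, map_sum, Pi.add_apply, Finset.sum_apply, A.intMulVec_apply x, hx]
  push_cast
  exact congrArg _ (sum_congr rfl fun t _ => hg ⟨f, hf⟩ t i)
end

section
/- Let u, v ∈ ℕ and let A be a u × v matrix with rational entries. Suppose that for every CR-set B ⊆ ℤ, the set {y⃗ ∈ ℤ^v : A y⃗ ∈ B^u} is a CR-set in ℤ^v. Then for every essential CR-set C ⊆ ℤ, the set {y⃗ ∈ ℤ^v : A y⃗ ∈ C^u} is an essential CR-set in ℤ^v. -/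
/-- `A` is an essential CR-set (combinatorial characterization): there is a decreasing
sequence `Cₙ` of CR-subsets of `A` such that each `Cₙ` is "syndetically structured":
for every `x ∈ Cₙ` there is `m` with `C_m ⊆ -x + Cₙ`. -/
def EssentialCRSet {S : Type*} [AddCommMonoid S] (A : Set S) : Prop :=
  ∃ C : ℕ → Set S,
    (∀ n, C n ⊆ A) ∧
    (∀ n, C (n + 1) ⊆ C n) ∧
    (∀ n, ∀ x ∈ C n, ∃ m, C m ⊆ {z : S | x + z ∈ C n}) ∧
    (∀ n, CRSet (C n))

/-- if preimages of CR-sets under `A` are CR-sets, then preimages of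
essential CR-sets are essential CR-sets. -/
theorem stmt10 (u v : ℕ) (A : Matrix (Fin u) (Fin v) ℚ)
    (h : ∀ B : Set ℤ, CRSet B →
      CRSet {y : Fin v → ℤ |
        ∀ i : Fin u, ∃ b ∈ B, A.mulVec (fun j => (y j : ℚ)) i = (b : ℚ)})
    (C : Set ℤ) (hC : EssentialCRSet C) :
    EssentialCRSet {y : Fin v → ℤ |
      ∀ i : Fin u, ∃ b ∈ C, A.mulVec (fun j => (y j : ℚ)) i = (b : ℚ)} := by
  obtain ⟨Cs, hsub, hdec, hshift, hcr⟩ := hC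
  have hanti : ∀ {a b : ℕ}, a ≤ b → Cs b ⊆ Cs a := by
    intro a b hab
    induction hab with
    | refl => exact subset_rfl
    | step _ ih => exact (hdec _).trans ih
  refine ⟨fun n => {y : Fin v → ℤ |
      ∀ i : Fin u, ∃ b ∈ Cs n, A.mulVec (fun j => (y j : ℚ)) i = (b : ℚ)},
    ?_, ?_, ?_, fun n => h _ (hcr n)⟩
  · intro n y hy i
    obtain ⟨b, hb, hb2⟩ := hy i
    exact ⟨b, hsub n hb, hb2⟩
  · intro n y hy i
    obtain ⟨b, hb, hb2⟩ := hy i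
    exact ⟨b, hdec n hb, hb2⟩
  · intro n y hy
    choose b hb hbeq using hy
    choose m hm using fun i => hshift n (b i) (hb i)
    obtain ⟨M, hM⟩ : ∃ M : ℕ, ∀ i : Fin u, m i ≤ M := by
      rcases (Finset.univ.image m).exists_le with ⟨M, hM⟩
      exact ⟨M, fun i => hM _ (Finset.mem_image_of_mem m (Finset.mem_univ i))⟩
    refine ⟨M, ?_⟩
    intro z hz i
    obtain ⟨c, hc, hceq⟩ := hz i
    refine ⟨b i + c, hm i (hanti (hM i) hc), ?_⟩
    have hcast : (fun j => (((y + z) j : ℤ) : ℚ))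
        = (fun j => ((y j : ℤ) : ℚ)) + (fun j => ((z j : ℤ) : ℚ)) := by
      funext j; simp [Pi.add_apply]
    rw [hcast, Matrix.mulVec_add]
    simp [Pi.add_apply, hbeq i, hceq]
end

section
/- Let (Cₙ) be a decreasing sequence of subsets of ℤ such that for each n and each x ∈ Cₙ there exists m with C_m ⊆ −x + Cₙ. Let A = (a_{i,j}) be a u × v integer matrix and set Dₙ = {y⃗ ∈ ℤ^v : A y⃗ ∈ Cₙ^u}. Then (Dₙ) is decreasing and for each n and each y⃗ ∈ Dₙ there exists m with D_m ⊆ −y⃗ + Dₙ. -/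
/-- if `(Cₙ)` is a decreasing sequence of subsets of `ℤ` such that for
each `n` and `x ∈ Cₙ` there is `m` with `C_m ⊆ -x + Cₙ`, and `A` is a `u × v` integer
matrix with `Dₙ = {y ∈ ℤ^v : A y ∈ Cₙ^u}`, then `(Dₙ)` is decreasing and for each `n`
and `y ∈ Dₙ` there is `m` with `D_m ⊆ -y + Dₙ`. -/
theorem stmt11 (u v : ℕ) (A : Matrix (Fin u) (Fin v) ℤ) (C : ℕ → Set ℤ)
    (hdec : ∀ n, C (n + 1) ⊆ C n)
    (hshift : ∀ n, ∀ x ∈ C n, ∃ m, C m ⊆ {z : ℤ | x + z ∈ C n}) :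
    (∀ n, {y : Fin v → ℤ | ∀ i, A.mulVec y i ∈ C (n + 1)} ⊆
      {y : Fin v → ℤ | ∀ i, A.mulVec y i ∈ C n}) ∧
    (∀ n, ∀ y ∈ {y : Fin v → ℤ | ∀ i, A.mulVec y i ∈ C n},
      ∃ m, {z : Fin v → ℤ | ∀ i, A.mulVec z i ∈ C m} ⊆
        {z : Fin v → ℤ | ∀ i, A.mulVec (y + z) i ∈ C n}) := by
  have hanti : ∀ m m', m ≤ m' → C m' ⊆ C m := by
    intro m m' h
    induction h with
    | refl => exact subset_rfl
    | step h ih => exact fun x hx => ih (hdec _ hx)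
  refine ⟨fun n y hy i => hdec n (hy i), fun n y hy => ?_⟩
  choose f hf using fun i => hshift n (A.mulVec y i) (hy i)
  refine ⟨Finset.univ.sup f, fun z hz i => ?_⟩
  have : A.mulVec z i ∈ C (f i) :=
    hanti _ _ (Finset.le_sup (Finset.mem_univ i)) (hz i)
  have := hf i this
  simpa [Matrix.mulVec_add] using this
end

section
/- Let d ≥ 1 and m ≥ 1, and set k = d^m(d−1)+1. For any m functions f₁,...,f_m : ℕ → ℤ and any n ∈ ℕ, there exists a nonempty set Kₙ ⊆ {(n−1)k+1, ..., nk} of cardinality d such that d divides ∑_{t∈Kₙ} f_i(t) for every i ∈ {1,...,m}. -/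
lemma aux15 (d : ℕ) (hd : 1 ≤ d) :
    ∀ (m : ℕ) (g : Fin m → ℕ → ZMod d) (S : Finset ℕ),
      d ^ m * (d - 1) + 1 ≤ S.card →
      ∃ T ⊆ S, T.card = d ∧ ∀ i, ∀ t ∈ T, ∀ s ∈ T, g i t = g i s := by
  intro m
  induction m with
  | zero =>
      intro g S hS
      have hd' : d ≤ S.card := by simp only [pow_zero, one_mul] at hS; omega
      obtain ⟨T, hTS, hTcard⟩ := S.exists_subset_card_eq hd'
      exact ⟨T, hTS, hTcard, fun i => i.elim0⟩
  | succ m ih =>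
      intro g S hS
      haveI : NeZero d := ⟨by omega⟩
      have hmaps : ∀ a ∈ S, g (Fin.last m) a ∈ (Finset.univ : Finset (ZMod d)) :=
        fun a _ => Finset.mem_univ _
      have hcard : (Finset.univ : Finset (ZMod d)).card * (d ^ m * (d - 1)) < S.card := by
        have : (Finset.univ : Finset (ZMod d)).card = d := by
          simp [ZMod.card]
        rw [this]
        have : d * (d ^ m * (d - 1)) = d ^ (m + 1) * (d - 1) := by ring
        omega
      obtain ⟨b, -, hb⟩ :=
        Finset.exists_lt_card_fiber_of_mul_lt_card_of_maps_to hmaps hcard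
      set S' := S.filter (fun x => g (Fin.last m) x = b) with hS'
      obtain ⟨T, hTS', hTcard, hconst⟩ :=
        ih (fun i => g i.castSucc) S' (by omega)
      refine ⟨T, hTS'.trans (Finset.filter_subset _ _), hTcard, ?_⟩
      intro i t ht s hs
      refine Fin.lastCases ?_ ?_ i
      · have h1 := (Finset.mem_filter.mp (hTS' ht)).2
        have h2 := (Finset.mem_filter.mp (hTS' hs)).2
        rw [h1, h2]
      · intro j
        exact hconst j t ht s hs

/-- with `k = d^m (d-1) + 1`, for any `m` integer sequences and any
`n ≥ 1` there is a `d`-element subset `K ⊆ {(n-1)k+1, …, nk}` with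
`d ∣ ∑_{t∈K} fᵢ t` for every `i`. -/
theorem stmt15 (d m : ℕ) (hd : 1 ≤ d) (hm : 1 ≤ m) (f : Fin m → ℕ → ℤ)
    (n : ℕ) (hn : 1 ≤ n) :
    ∃ K : Finset ℕ, K.Nonempty ∧
      K ⊆ Finset.Icc ((n - 1) * (d ^ m * (d - 1) + 1) + 1)
        (n * (d ^ m * (d - 1) + 1)) ∧
      K.card = d ∧
      ∀ i : Fin m, (d : ℤ) ∣ ∑ t ∈ K, f i t := by
  set k := d ^ m * (d - 1) + 1 with hk
  set S := Finset.Icc ((n - 1) * k + 1) (n * k) with hSdef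
  have hScard : S.card = k := by
    rw [hSdef, Nat.card_Icc]
    have : (n - 1) * k + k = n * k := by
      have : n - 1 + 1 = n := by omega
      calc (n - 1) * k + k = (n - 1 + 1) * k := by ring
        _ = n * k := by rw [this]
    omega
  obtain ⟨T, hTS, hTcard, hconst⟩ :=
    aux15 d hd m (fun i t => ((f i t : ZMod d))) S (by omega)
  have hTne : T.Nonempty := Finset.card_pos.mp (by omega)
  refine ⟨T, hTne, hTS, hTcard, ?_⟩
  intro i
  rw [← ZMod.intCast_zmod_eq_zero_iff_dvd]
  push_cast
  obtain ⟨t0, ht0⟩ := hTne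
  have : ∑ t ∈ T, ((f i t : ZMod d)) = ∑ t ∈ T, ((f i t0 : ZMod d)) :=
    Finset.sum_congr rfl (fun t ht => hconst i t ht t0 ht0)
  rw [this, Finset.sum_const, hTcard]
  simp [nsmul_eq_mul]
end
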